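/- Assume (H1), (H2) and (H2+). There exists a function h : (0,∞) → (0,∞) with h(t) → 0 as t → 0 satisfying the following: for every n ≥ 1 and every word (ω₁…ω_n) ∈ {0,1}ⁿ such that the map g = f_{[ω₁…ω_n]} has a fixed point in [0,1], and for every ε > 0 and every x ∈ [a_{[ω₁…ω_n]}, 1] with |g(x) − x| < ε, the distance from x to the closest fixed point of g is at most h(ε). -/

import Mathlib

open Set MeasureTheory Filter

namespace DGR

/-- The two-sided sequence space `Σ₂ = {0,1}^ℤ`. -/
abbrev Seq2 := ℤ → Fin 2

/-- The left shift map `σ`. -/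
def shift (ξ : Seq2) : Seq2 := fun n => ξ (n + 1)

/-- The constant sequence `0^ℤ`. -/
def zeroSeq : Seq2 := fun _ => 0

/-- The skew-product `F̃(ξ,x) = (σ ξ, f̃_{ξ₀} x)`. -/
def F (f0 f1 : ℝ → ℝ) (p : Seq2 × ℝ) : Seq2 × ℝ :=
  (shift p.1, if p.1 0 = 0 then f0 p.2 else f1 p.2)

/-- The fixed point `P = (0^ℤ, 1)`. -/
def Pfix : Seq2 × ℝ := (zeroSeq, 1)

/-- The fixed point `Q = (0^ℤ, 0)`. -/
def Qfix : Seq2 × ℝ := (zeroSeq, 0)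

/-- `f_ξ^n = f_{ξ_{n-1}} ∘ ⋯ ∘ f_{ξ₀}`. -/
def fIter (f0 f1 : ℝ → ℝ) (ξ : Seq2) : ℕ → ℝ → ℝ
  | 0, x => x
  | n + 1, x => (if ξ (n : ℤ) = 0 then f0 else f1) (fIter f0 f1 ξ n x)

/-- The derivative `(f_ξ^n)'(x)` (chain rule product). -/
def fIterDeriv (f0 f1 df0 df1 : ℝ → ℝ) (ξ : Seq2) : ℕ → ℝ → ℝ
  | 0, _ => 1
  | n + 1, x => fIterDeriv f0 f1 df0 df1 ξ n x *
      (if ξ (n : ℤ) = 0 then df0 else df1) (fIter f0 f1 ξ n x)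

/-- `ξ⁺` is admissible for `x`: all forward iterates are defined and stay in `[0,1]`. -/
def forwardAdmissible (f0 f1 : ℝ → ℝ) (d : ℝ) (ξ : Seq2) (x : ℝ) : Prop :=
  ∀ n : ℕ, fIter f0 f1 ξ n x ∈ Icc (0 : ℝ) 1 ∧ (ξ (n : ℤ) = 1 → d ≤ fIter f0 f1 ξ n x)

/-- `ξ⁻` is admissible for `x`: there is a backward orbit through `x` staying in `[0,1]`. -/
def backwardAdmissible (f0 f1 : ℝ → ℝ) (d : ℝ) (ξ : Seq2) (x : ℝ) : Prop :=
  ∃ y : ℕ → ℝ, y 0 = x ∧ ∀ m : ℕ,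
    y m ∈ Icc (0 : ℝ) 1 ∧
    (ξ (-(m : ℤ) - 1) = 0 → f0 (y (m + 1)) = y m) ∧
    (ξ (-(m : ℤ) - 1) = 1 → d ≤ y (m + 1) ∧ f1 (y (m + 1)) = y m)

/-- The maximal invariant set `Γ` of `F̃` in `Σ₂ × [0,1]`. -/
def Gamma (f0 f1 : ℝ → ℝ) (d : ℝ) : Set (Seq2 × ℝ) :=
  { p | forwardAdmissible f0 f1 d p.1 p.2 ∧ backwardAdmissible f0 f1 d p.1 p.2 }

/-- The subshift `Σ = π(Γ)` of admissible sequences. -/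
def SigmaA (f0 f1 : ℝ → ℝ) (d : ℝ) : Set Seq2 := Prod.fst '' Gamma f0 f1 d

/-- `I_{ξ⁺}`. -/
def Iplus (f0 f1 : ℝ → ℝ) (d : ℝ) (ξ : Seq2) : Set ℝ := { x | forwardAdmissible f0 f1 d ξ x }

/-- `I_{ξ⁻}`. -/
def Iminus (f0 f1 : ℝ → ℝ) (d : ℝ) (ξ : Seq2) : Set ℝ := { x | backwardAdmissible f0 f1 d ξ x }

/-- `I_ξ = I_{ξ⁺} ∩ I_{ξ⁻}`, the spine over `ξ`. -/
def Ifiber (f0 f1 : ℝ → ℝ) (d : ℝ) (ξ : Seq2) : Set ℝ := Iplus f0 f1 d ξ ∩ Iminus f0 f1 d ξ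

/-- `x_{ξ⁺}`, the left endpoint of `I_{ξ⁺} = [x_{ξ⁺}, 1]`. -/
noncomputable def xPlus (f0 f1 : ℝ → ℝ) (d : ℝ) (ξ : Seq2) : ℝ := sInf (Iplus f0 f1 d ξ)

/-- `x_{ξ⁻}`, the right endpoint of `I_{ξ⁻} = [0, x_{ξ⁻}]`. -/
noncomputable def xMinus (f0 f1 : ℝ → ℝ) (d : ℝ) (ξ : Seq2) : ℝ := sSup (Iminus f0 f1 d ξ)

/-- Hypothesis (H1), stated for strictly increasing differentiable extensions
`f0, f1 : ℝ → ℝ` with derivative functions `df0, df1`, whose restrictions to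
`[0,1]` resp. `[d,1]` are the fiber maps. -/
structure H1 (f0 f1 df0 df1 : ℝ → ℝ) (d : ℝ) : Prop where
  d_mem : d ∈ Ioo (0 : ℝ) 1
  mono0 : StrictMono f0
  mono1 : StrictMono f1
  hasDeriv0 : ∀ x, HasDerivAt f0 (df0 x) x
  hasDeriv1 : ∀ x, HasDerivAt f1 (df1 x) x
  contDeriv0 : ContinuousOn df0 (Icc 0 1)
  contDeriv1 : ContinuousOn df1 (Icc d 1)
  maps0 : MapsTo f0 (Icc 0 1) (Icc 0 1)
  surj0 : SurjOn f0 (Icc 0 1) (Icc 0 1)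
  maps1 : MapsTo f1 (Icc d 1) (Icc 0 1)
  deriv0_zero : 1 < df0 0
  deriv0_one : df0 1 ∈ Ioo (0 : ℝ) 1
  f0_above : ∀ x ∈ Ioo (0 : ℝ) 1, x < f0 x
  f1_d : f1 d = 0
  f1_below : ∀ x ∈ Icc d 1, f1 x < x
  deriv1_one : 0 < df1 1

/-- Hypothesis (H2): `f₀'` strictly decreasing, `f₁'` nonincreasing. -/
def H2 (df0 df1 : ℝ → ℝ) (d : ℝ) : Prop :=
  StrictAntiOn df0 (Icc 0 1) ∧ AntitoneOn df1 (Icc d 1)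

/-- Hypothesis (H2+) with constant `M`. -/
def H2plus (df0 df1 : ℝ → ℝ) (d M : ℝ) : Prop :=
  1 < M ∧
  (∀ x ∈ Icc (0 : ℝ) 1, ∀ y ∈ Icc (0 : ℝ) 1, x < y →
    M⁻¹ * (y - x) ≤ Real.log (df0 x) - Real.log (df0 y) ∧
      Real.log (df0 x) - Real.log (df0 y) ≤ M * (y - x)) ∧
  (∀ x ∈ Icc d 1, ∀ y ∈ Icc d 1, x < y →
    M⁻¹ * (y - x) ≤ Real.log (df1 x) - Real.log (df1 y) ∧
      Real.log (df1 x) - Real.log (df1 y) ≤ M * (y - x))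

/-- The fiber Lyapunov exponent `χ(μ) = ∫ log f'_{ξ₀}(x) dμ(ξ,x)`. -/
noncomputable def lyap (df0 df1 : ℝ → ℝ) (μ : Measure (Seq2 × ℝ)) : ℝ :=
  ∫ p, Real.log ((if p.1 0 = 0 then df0 else df1) p.2) ∂μ

/-- An `F`-invariant Borel probability measure on `Γ`. -/
def IsInvGamma (f0 f1 : ℝ → ℝ) (d : ℝ) (μ : Measure (Seq2 × ℝ)) : Prop :=
  IsProbabilityMeasure μ ∧ μ (Gamma f0 f1 d) = 1 ∧ μ.map (F f0 f1) = μ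

/-- An ergodic `F`-invariant Borel probability measure on `Γ`. -/
def IsErgGamma (f0 f1 : ℝ → ℝ) (d : ℝ) (μ : Measure (Seq2 × ℝ)) : Prop :=
  IsInvGamma f0 f1 d μ ∧ Ergodic (F f0 f1) μ

/-- A `σ`-invariant Borel probability measure on `Σ`. -/
def IsInvSigma (f0 f1 : ℝ → ℝ) (d : ℝ) (ν : Measure Seq2) : Prop :=
  IsProbabilityMeasure ν ∧ ν (SigmaA f0 f1 d) = 1 ∧ ν.map shift = ν

/-- An ergodic `σ`-invariant Borel probability measure on `Σ`. -/
def IsErgSigma (f0 f1 : ℝ → ℝ) (d : ℝ) (ν : Measure Seq2) : Prop :=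
  IsInvSigma f0 f1 d ν ∧ Ergodic shift ν

/-- `f_{[w]} = f_{w_{n-1}} ∘ ⋯ ∘ f_{w_0}` for a finite word `w`. -/
def fWord (f0 f1 : ℝ → ℝ) : List (Fin 2) → ℝ → ℝ
  | [], x => x
  | i :: w, x => fWord f0 f1 w ((if i = 0 then f0 else f1) x)

/-- The derivative `(f_{[w]})'(x)`. -/
def fWordDeriv (f0 f1 df0 df1 : ℝ → ℝ) : List (Fin 2) → ℝ → ℝ
  | [], _ => 1
  | i :: w, x => (if i = 0 then df0 x else df1 x) *
      fWordDeriv f0 f1 df0 df1 w ((if i = 0 then f0 else f1) x)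

/-- The word `w` is (forward) admissible at `x`. -/
def wordAdm (f0 f1 : ℝ → ℝ) (d : ℝ) : List (Fin 2) → ℝ → Prop
  | [], x => x ∈ Icc (0 : ℝ) 1
  | i :: w, x => x ∈ Icc (0 : ℝ) 1 ∧ (i = 1 → d ≤ x) ∧
      wordAdm f0 f1 d w ((if i = 0 then f0 else f1) x)

/-- The admissibility interval `I_{[w]}`. -/
def IWord (f0 f1 : ℝ → ℝ) (d : ℝ) (w : List (Fin 2)) : Set ℝ := { x | wordAdm f0 f1 d w x }

/-- The point `a_{[w]}`, left endpoint of `I_{[w]} = [a_{[w]}, 1]`. -/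
noncomputable def aWord (f0 f1 : ℝ → ℝ) (d : ℝ) (w : List (Fin 2)) : ℝ := sInf (IWord f0 f1 d w)

/-- The periodic sequence `w^ℤ`. -/
def perSeq (w : List (Fin 2)) : Seq2 := fun n => w.getD (n % (w.length : ℤ)).toNat 0

/-- The finite word `(ξ_a, ξ_{a+1}, …, ξ_{a+n-1})` read off a sequence. -/
def seqWord (ξ : Seq2) (a : ℤ) (n : ℕ) : List (Fin 2) := List.ofFn fun i : Fin n => ξ (a + (i.1 : ℤ))

/-- `X` is a periodic point of `F` in `Γ` with period `n ≥ 1`. -/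
def IsPerPt (f0 f1 : ℝ → ℝ) (d : ℝ) (X : Seq2 × ℝ) (n : ℕ) : Prop :=
  X ∈ Gamma f0 f1 d ∧ 1 ≤ n ∧ (F f0 f1)^[n] X = X

/-- Hyperbolic periodic point (the multiplier is different from 1). -/
def IsHypPerPt (f0 f1 df0 df1 : ℝ → ℝ) (d : ℝ) (X : Seq2 × ℝ) : Prop :=
  ∃ n, IsPerPt f0 f1 d X n ∧ fIterDeriv f0 f1 df0 df1 X.1 n X.2 ≠ 1

/-- Hyperbolic periodic point of expanding type. -/
def IsExpPerPt (f0 f1 df0 df1 : ℝ → ℝ) (d : ℝ) (X : Seq2 × ℝ) : Prop :=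
  ∃ n, IsPerPt f0 f1 d X n ∧ 1 < fIterDeriv f0 f1 df0 df1 X.1 n X.2

/-- Hyperbolic periodic point of contracting type. -/
def IsConPerPt (f0 f1 df0 df1 : ℝ → ℝ) (d : ℝ) (X : Seq2 × ℝ) : Prop :=
  ∃ n, IsPerPt f0 f1 d X n ∧ 0 < fIterDeriv f0 f1 df0 df1 X.1 n X.2 ∧
    fIterDeriv f0 f1 df0 df1 X.1 n X.2 < 1

/-- Parabolic periodic point (multiplier 1). -/
def IsParPerPt (f0 f1 df0 df1 : ℝ → ℝ) (d : ℝ) (X : Seq2 × ℝ) : Prop :=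
  ∃ n, IsPerPt f0 f1 d X n ∧ fIterDeriv f0 f1 df0 df1 X.1 n X.2 = 1

/-- The stable set `W^s(R, F)` of a point, for `F : Γ → Γ`. -/
def Ws (f0 f1 : ℝ → ℝ) (d : ℝ) (R : Seq2 × ℝ) : Set (Seq2 × ℝ) :=
  { X | (∀ k : ℕ, (F f0 f1)^[k] X ∈ Gamma f0 f1 d) ∧
      Tendsto (fun k => (F f0 f1)^[k] X) atTop (nhds R) }

/-- The unstable set `W^u(R, F) = W^s(R, F⁻¹)` of a point, for `F : Γ → Γ`. -/
def Wu (f0 f1 : ℝ → ℝ) (d : ℝ) (R : Seq2 × ℝ) : Set (Seq2 × ℝ) :=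
  { X | ∃ Z : ℕ → Seq2 × ℝ, Z 0 = X ∧
      (∀ m : ℕ, Z m ∈ Gamma f0 f1 d ∧ F f0 f1 (Z (m + 1)) = Z m) ∧
      Tendsto Z atTop (nhds R) }

/-- The stable set of the orbit of `R`. -/
def WsOrbit (f0 f1 : ℝ → ℝ) (d : ℝ) (R : Seq2 × ℝ) : Set (Seq2 × ℝ) :=
  ⋃ j : ℕ, Ws f0 f1 d ((F f0 f1)^[j] R)

/-- The unstable set of the orbit of `R`. -/
def WuOrbit (f0 f1 : ℝ → ℝ) (d : ℝ) (R : Seq2 × ℝ) : Set (Seq2 × ℝ) :=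
  ⋃ j : ℕ, Wu f0 f1 d ((F f0 f1)^[j] R)

/-- The homoclinic class `H(R,F)`. -/
def homClass (f0 f1 : ℝ → ℝ) (d : ℝ) (R : Seq2 × ℝ) : Set (Seq2 × ℝ) :=
  closure (WsOrbit f0 f1 d R ∩ WuOrbit f0 f1 d R)

/-- `R₁` and `R₂` are homoclinically related. -/
def HomRel (f0 f1 : ℝ → ℝ) (d : ℝ) (R₁ R₂ : Seq2 × ℝ) : Prop :=
  (WsOrbit f0 f1 d R₁ ∩ WuOrbit f0 f1 d R₂).Nonempty ∧
  (WuOrbit f0 f1 d R₁ ∩ WsOrbit f0 f1 d R₂).Nonempty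

/-- A set is (fiber) hyperbolic of expanding type. -/
def IsHypExpanding (f0 f1 df0 df1 : ℝ → ℝ) (Λ : Set (Seq2 × ℝ)) : Prop :=
  ∃ C : ℝ, 0 < C ∧ ∃ α : ℝ, 0 < α ∧ ∀ p ∈ Λ, ∀ n : ℕ, 1 ≤ n →
    C * Real.exp (α * n) ≤ fIterDeriv f0 f1 df0 df1 p.1 n p.2

/-- A set is (fiber) hyperbolic of contracting type (backward iterates expand). -/
def IsHypContracting (f0 f1 df0 df1 : ℝ → ℝ) (d : ℝ) (Λ : Set (Seq2 × ℝ)) : Prop :=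
  ∃ C : ℝ, 0 < C ∧ ∃ α : ℝ, 0 < α ∧ ∀ p ∈ Λ, ∀ Z : ℕ → Seq2 × ℝ, Z 0 = p →
    (∀ m : ℕ, Z m ∈ Gamma f0 f1 d ∧ F f0 f1 (Z (m + 1)) = Z m) →
    ∀ n : ℕ, 1 ≤ n → fIterDeriv f0 f1 df0 df1 (Z n).1 n (Z n).2 ≤ C * Real.exp (-(α * n))

/-- The nonwandering set `Ω(Γ, F)` of `F : Γ → Γ`. -/
def nonwandering (f0 f1 : ℝ → ℝ) (d : ℝ) : Set (Seq2 × ℝ) :=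
  { X | X ∈ Gamma f0 f1 d ∧ ∀ U : Set (Seq2 × ℝ), IsOpen U → X ∈ U →
      ∃ n : ℕ, 1 ≤ n ∧ ∃ Y ∈ U ∩ Gamma f0 f1 d, (F f0 f1)^[n] Y ∈ U ∩ Gamma f0 f1 d }

/-- The finite word `w` occurs in the sequence `ξ`. -/
def OccursIn (w : List (Fin 2)) (ξ : Seq2) : Prop :=
  ∃ k : ℤ, ∀ i : ℕ, i < w.length → ξ (k + (i : ℤ)) = w.getD i 0

/-- The set `Σ^het` of heteroclinic admissible sequences. -/
def SigmaHet (f0 f1 : ℝ → ℝ) (d : ℝ) : Set Seq2 :=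
  { ξ | ξ ∈ SigmaA f0 f1 d ∧ ∃ k : ℤ, ∃ w : List (Fin 2),
      (∀ m : ℤ, m < k → ξ m = 0) ∧
      (∀ i : ℕ, i < w.length → ξ (k + (i : ℤ)) = w.getD i 0) ∧
      (∀ m : ℤ, k + (w.length : ℤ) ≤ m → ξ m = 0) ∧
      fWord f0 f1 w 1 = 0 }

/-- `Σ^cod = Σ ∖ Σ^het`. -/
def SigmaCod (f0 f1 : ℝ → ℝ) (d : ℝ) : Set Seq2 := SigmaA f0 f1 d \ SigmaHet f0 f1 d

/-- `Γ^cod = π⁻¹(Σ^cod) ∩ Γ`. -/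
def GammaCod (f0 f1 : ℝ → ℝ) (d : ℝ) : Set (Seq2 × ℝ) :=
  { p ∈ Gamma f0 f1 d | p.1 ∈ SigmaCod f0 f1 d }

/-- `Σ^sing`: sequences whose spine is a singleton. -/
def SigmaSing (f0 f1 : ℝ → ℝ) (d : ℝ) : Set Seq2 :=
  { ξ | ξ ∈ SigmaA f0 f1 d ∧ (Ifiber f0 f1 d ξ).Subsingleton }

/-- `Σ^spine`: sequences whose spine is a nondegenerate interval. -/
def SigmaSpine (f0 f1 : ℝ → ℝ) (d : ℝ) : Set Seq2 :=
  { ξ | ξ ∈ SigmaA f0 f1 d ∧ ¬ (Ifiber f0 f1 d ξ).Subsingleton }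

/-- `T` restricted to `S` is topologically transitive. -/
def TransOn {α : Type*} [TopologicalSpace α] (T : α → α) (S : Set α) : Prop :=
  ∀ U V : Set α, IsOpen U → IsOpen V → (U ∩ S).Nonempty → (V ∩ S).Nonempty →
    ∃ n : ℕ, 1 ≤ n ∧ (T^[n] '' (U ∩ S) ∩ (V ∩ S)).Nonempty

/-- `T` restricted to `S` is topologically mixing. -/
def MixOn {α : Type*} [TopologicalSpace α] (T : α → α) (S : Set α) : Prop :=
  ∀ U V : Set α, IsOpen U → IsOpen V → (U ∩ S).Nonempty → (V ∩ S).Nonempty →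
    ∃ N : ℕ, ∀ n : ℕ, N ≤ n → (T^[n] '' (U ∩ S) ∩ (V ∩ S)).Nonempty

/-- A subshift of finite type: the sequences avoiding a finite list of forbidden words. -/
def IsSFT (S : Set Seq2) : Prop :=
  ∃ Fw : Finset (List (Fin 2)), S = { ξ | ∀ w ∈ Fw, ¬ OccursIn w ξ }

/-- Number of words of length `n` appearing in sequences of `S`. -/
noncomputable def wordCount (S : Set Seq2) (n : ℕ) : ℕ :=
  Nat.card { w : List (Fin 2) // w.length = n ∧ ∃ ξ ∈ S, OccursIn w ξ }

/-- Topological entropy of the shift on a subshift `S`, as exponential growth rate of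
the number of words. -/
noncomputable def subshiftEntropy (S : Set Seq2) : ℝ :=
  Filter.limsup (fun n : ℕ => Real.log (wordCount S n) / n) Filter.atTop

/-- `Λ` is `F`-invariant. -/
def IsInvariantSet (f0 f1 : ℝ → ℝ) (Λ : Set (Seq2 × ℝ)) : Prop := F f0 f1 '' Λ = Λ

/-- `Λ` is locally maximal: it is the set of full orbits inside some neighborhood. -/
def IsLocallyMaximal (f0 f1 : ℝ → ℝ) (Λ : Set (Seq2 × ℝ)) : Prop :=
  ∃ V : Set (Seq2 × ℝ), IsOpen V ∧ Λ ⊆ V ∧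
    Λ = { X | ∃ Z : ℤ → Seq2 × ℝ, Z 0 = X ∧ (∀ n : ℤ, Z (n + 1) = F f0 f1 (Z n)) ∧
      ∀ n : ℤ, Z n ∈ V }

/-- Basic set with uniform fiber expansion. -/
def IsBasicExp (f0 f1 df0 df1 : ℝ → ℝ) (d : ℝ) (Λ : Set (Seq2 × ℝ)) : Prop :=
  Λ ⊆ Gamma f0 f1 d ∧ IsCompact Λ ∧ IsInvariantSet f0 f1 Λ ∧ IsLocallyMaximal f0 f1 Λ ∧
  TransOn (F f0 f1) Λ ∧ IsHypExpanding f0 f1 df0 df1 Λ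

/-- Basic set with uniform fiber contraction. -/
def IsBasicCon (f0 f1 df0 df1 : ℝ → ℝ) (d : ℝ) (Λ : Set (Seq2 × ℝ)) : Prop :=
  Λ ⊆ Gamma f0 f1 d ∧ IsCompact Λ ∧ IsInvariantSet f0 f1 Λ ∧ IsLocallyMaximal f0 f1 Λ ∧
  TransOn (F f0 f1) Λ ∧ IsHypContracting f0 f1 df0 df1 d Λ

/-- The entropy function `𝓗(p) = -p log p - (1-p) log (1-p)`. -/
noncomputable def entH (p : ℝ) : ℝ := -(p * Real.log p) - (1 - p) * Real.log (1 - p)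

/-!
Write `g = f_{[w]}` on its domain `[a, 1]` and `φ = g - id`. Every `fᵢ'` is positive and
nonincreasing, so `g'` is positive and nonincreasing, and (H2+) applied to the first letter of `w`
makes it decay at a uniform rate: `g'(t) (1 + (t - r) / M) ≤ g'(r)` for `r ≤ t`. Thus `φ` is
concave in a quantitative way, and `φ(a) = -a ≤ 0`, `φ(1) ≤ 0`.

Let `|φ(x)| ≤ ε`. According to the sign of `φ(x)` and to whether `φ` decreases to the right of
`x` or increases to its left, the intermediate value theorem gives a fixed point `p` with `φ ≤ ε`
at the midpoint of `p` and `x`. Then `g'` is at most about `1` at that midpoint, and by the decay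
noticeably less than `1` on the last quarter of the segment between `p` and `x`; as `g` still has
to increase by about `|x - p|` along the segment, `|x - p|² ≤ 24 ε (4 M + |x - p|) ≤ 120 M ε`,
and `h(ε) = √(120 M ε)` works.
-/

/-- The multiplicative form of the lower bound `(t - r) / M ≤ log G r - log G t` in (H2+). -/
def DecayOn (G : ℝ → ℝ) (M : ℝ) (S : Set ℝ) : Prop :=
  ∀ r ∈ S, ∀ t ∈ S, r ≤ t → G t * (1 + (t - r) / M) ≤ G r

section IntervalMaps

variable {g G : ℝ → ℝ} {M : ℝ}

lemma DecayOn.mono {S T : Set ℝ} (h : DecayOn G M S) (hT : T ⊆ S) : DecayOn G M T :=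
  fun r hr t ht => h r (hT hr) t (hT ht)

lemma DecayOn.antitoneOn {S : Set ℝ} (h : DecayOn G M S) (hM : 0 < M)
    (hG0 : ∀ r ∈ S, 0 ≤ G r) : AntitoneOn G S := by
  intro r hr t ht hrt
  have : 0 ≤ G t * ((t - r) / M) := mul_nonneg (hG0 t ht) (div_nonneg (sub_nonneg.2 hrt) hM.le)
  nlinarith [h r hr t ht hrt]

lemma sub_le_mul_sub_of_antitoneOn {s t : ℝ} (hg : ∀ r ∈ Icc s t, HasDerivAt g (G r) r)
    (hG : AntitoneOn G (Icc s t)) (hst : s ≤ t) : g t - g s ≤ G s * (t - s) := by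
  refine (convex_Icc s t).image_sub_le_mul_sub_of_deriv_le
    (fun r hr => (hg r hr).continuousAt.continuousWithinAt)
    (fun r hr => (hg r (interior_subset hr)).differentiableAt.differentiableWithinAt)
    (fun r hr => ?_) s (left_mem_Icc.2 hst) t (right_mem_Icc.2 hst) hst
  rw [(hg r (interior_subset hr)).deriv]
  exact hG (left_mem_Icc.2 hst) (interior_subset hr) (interior_subset hr).1

lemma mul_sub_le_sub_of_antitoneOn {s t : ℝ} (hg : ∀ r ∈ Icc s t, HasDerivAt g (G r) r)
    (hG : AntitoneOn G (Icc s t)) (hst : s ≤ t) : G t * (t - s) ≤ g t - g s := by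
  refine (convex_Icc s t).mul_sub_le_image_sub_of_le_deriv
    (fun r hr => (hg r hr).continuousAt.continuousWithinAt)
    (fun r hr => (hg r (interior_subset hr)).differentiableAt.differentiableWithinAt)
    (fun r hr => ?_) s (left_mem_Icc.2 hst) t (right_mem_Icc.2 hst) hst
  rw [(hg r (interior_subset hr)).deriv]
  exact hG (interior_subset hr) (right_mem_Icc.2 hst) (interior_subset hr).2

lemma sq_sub_le_of_decayOn {δ u v : ℝ} (hM : 0 < M) (huv : u ≤ v)
    (hg : ∀ r ∈ Icc u v, HasDerivAt g (G r) r) (hG0 : ∀ r ∈ Icc u v, 0 ≤ G r)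
    (hdecay : DecayOn G M (Icc u v)) (hu : |g u - u| ≤ δ) (hv : |g v - v| ≤ δ)
    (hmid : g ((u + v) / 2) - (u + v) / 2 ≤ δ) :
    (v - u) ^ 2 ≤ 24 * δ * (4 * M + (v - u)) := by
  have hG := hdecay.antitoneOn hM hG0
  set L := v - u
  set m := (u + v) / 2 with hm
  set m' := (u + 3 * v) / 4 with hm'
  have hum : u ≤ m := by linarith
  have hmm' : m ≤ m' := by linarith
  have hm'v : m' ≤ v := by linarith
  have hsub : ∀ {s t}, u ≤ s → t ≤ v → Icc s t ⊆ Icc u v := Icc_subset_Icc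
  have hA : G m * (L / 2) ≤ g m - g u := by
    convert mul_sub_le_sub_of_antitoneOn (fun r hr => hg r (hsub le_rfl (hmm'.trans hm'v) hr))
      (hG.mono (hsub le_rfl (hmm'.trans hm'v))) hum using 2
    ring
  have hB : g m' - g m ≤ G m * (L / 4) := by
    convert sub_le_mul_sub_of_antitoneOn (fun r hr => hg r (hsub hum hm'v hr))
      (hG.mono (hsub hum hm'v)) hmm' using 2
    ring
  have hC : g v - g m' ≤ G m' * (L / 4) := by
    convert sub_le_mul_sub_of_antitoneOn (fun r hr => hg r (hsub (hum.trans hmm') le_rfl hr))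
      (hG.mono (hsub (hum.trans hmm') le_rfl)) hm'v using 2
    ring
  have hD : G m' * (1 + L / (4 * M)) ≤ G m := by
    convert hdecay m ⟨hum, hmm'.trans hm'v⟩ m' ⟨hum.trans hmm', hm'v⟩ hmm' using 3
    field_simp
    ring
  have hGm : 0 ≤ G m := hG0 m ⟨hum, hmm'.trans hm'v⟩
  set k := L / (4 * M) with hk
  obtain ⟨hu₁, hu₂⟩ := abs_le.1 hu
  obtain ⟨hv₁, -⟩ := abs_le.1 hv
  have hδ : 0 ≤ δ := (abs_nonneg _).trans hu
  have hk0 : 0 ≤ k := by positivity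
  -- `φ m ≤ δ` bounds the slope `G m` on `[u, m]`, while `g` must rise by `L - 2δ` on `[u, v]`
  have hGmL : G m * L ≤ L + 4 * δ := by linarith
  have hsum : L / 2 - 4 * δ ≤ (G m + G m') * (L / 4) := by linarith
  have hgain : (1 + k) * (L / 2 - 4 * δ) ≤ (L + 4 * δ) * (2 + k) / 4 := by
    nlinarith [mul_le_mul_of_nonneg_right hD (by positivity : 0 ≤ L / 4),
      mul_le_mul_of_nonneg_left hsum (by positivity : 0 ≤ 1 + k)]
  have hkL : k * L ≤ 24 * δ + 20 * δ * k := by nlinarith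
  have hLk : L = 4 * M * k := by rw [hk]; field_simp
  rw [hLk] at hkL ⊢
  nlinarith [mul_le_mul_of_nonneg_left hkL (by positivity : 0 ≤ 4 * M)]

lemma antitoneOn_sub_id_of_le_one {s t : ℝ} (hg : ∀ r ∈ Icc s t, HasDerivAt g (G r) r)
    (hG : ∀ r ∈ Icc s t, G r ≤ 1) : AntitoneOn (fun r => g r - r) (Icc s t) := by
  have hφ : ∀ r ∈ Icc s t, HasDerivAt (fun r => g r - r) (G r - 1) r :=
    fun r hr => (hg r hr).sub (hasDerivAt_id r)
  refine antitoneOn_of_deriv_nonpos (convex_Icc s t)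
    (fun r hr => (hφ r hr).continuousAt.continuousWithinAt)
    (fun r hr => (hφ r (interior_subset hr)).differentiableAt.differentiableWithinAt)
    fun r hr => ?_
  rw [(hφ r (interior_subset hr)).deriv]
  linarith [hG r (interior_subset hr)]

lemma monotoneOn_sub_id_of_one_le {s t : ℝ} (hg : ∀ r ∈ Icc s t, HasDerivAt g (G r) r)
    (hG : ∀ r ∈ Icc s t, 1 ≤ G r) : MonotoneOn (fun r => g r - r) (Icc s t) := by
  have hφ : ∀ r ∈ Icc s t, HasDerivAt (fun r => g r - r) (G r - 1) r :=
    fun r hr => (hg r hr).sub (hasDerivAt_id r)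
  refine monotoneOn_of_deriv_nonneg (convex_Icc s t)
    (fun r hr => (hφ r hr).continuousAt.continuousWithinAt)
    (fun r hr => (hφ r (interior_subset hr)).differentiableAt.differentiableWithinAt)
    fun r hr => ?_
  rw [(hφ r (interior_subset hr)).deriv]
  linarith [hG r (interior_subset hr)]

lemma exists_zero_midpoint_le_of_antitoneOn {φ : ℝ → ℝ} {a b x δ : ℝ}
    (hφ : ContinuousOn φ (Icc a b)) (hb : φ b ≤ 0) (hx : x ∈ Icc a b)
    (hzero : ∃ p ∈ Icc a b, φ p = 0) (hanti : AntitoneOn φ (Icc x b)) (hδ : 0 ≤ δ)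
    (hxδ : φ x ≤ δ) : ∃ p ∈ Icc a b, φ p = 0 ∧ φ ((p + x) / 2) ≤ δ := by
  rcases le_or_gt 0 (φ x) with hx0 | hx0
  · obtain ⟨p, hp, hp0⟩ := intermediate_value_Icc' hx.2 (hφ.mono (Icc_subset_Icc_left hx.1))
      ⟨hb, hx0⟩
    refine ⟨p, ⟨hx.1.trans hp.1, hp.2⟩, hp0, le_trans ?_ hxδ⟩
    exact hanti ⟨le_rfl, hx.2⟩ ⟨by linarith [hp.1], by linarith [hp.2, hx.2]⟩
      (by linarith [hp.1])
  · -- the zeros lie to the left of `x`; take the one closest to `x`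
    obtain ⟨p₀, hp₀, hp₀0⟩ := hzero
    have hp₀x : p₀ ≤ x := by
      by_contra! h
      linarith [hanti ⟨le_rfl, hx.2⟩ ⟨h.le, hp₀.2⟩ h.le]
    set Z := Icc p₀ x ∩ φ ⁻¹' {0}
    have hZ : IsClosed Z :=
      (hφ.mono (Icc_subset_Icc hp₀.1 hx.2)).preimage_isClosed_of_isClosed isClosed_Icc
        isClosed_singleton
    have hZne : Z.Nonempty := ⟨p₀, ⟨le_rfl, hp₀x⟩, hp₀0⟩
    have hZbdd : BddAbove Z := ⟨x, fun s hs => hs.1.2⟩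
    obtain ⟨⟨hp₀p, hpx⟩, hp0⟩ := hZ.csSup_mem hZne hZbdd
    set p := sSup Z
    refine ⟨p, ⟨hp₀.1.trans hp₀p, hpx.trans hx.2⟩, hp0, ?_⟩
    by_contra! hmid
    obtain ⟨t, ht, ht0⟩ := intermediate_value_Icc' (by linarith : (p + x) / 2 ≤ x)
      (hφ.mono (Icc_subset_Icc (by linarith [hp₀.1]) hx.2)) ⟨hx0.le, by linarith⟩
    have hpx' : p < x := lt_of_le_of_ne hpx fun h => by rw [h] at hp0; exact hx0.ne hp0
    have := le_csSup hZbdd ⟨⟨by linarith [ht.1], ht.2⟩, ht0⟩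
    linarith [ht.1]

lemma exists_zero_midpoint_le_of_monotoneOn {φ : ℝ → ℝ} {a b x δ : ℝ}
    (hφ : ContinuousOn φ (Icc a b)) (ha : φ a ≤ 0) (hx : x ∈ Icc a b)
    (hzero : ∃ p ∈ Icc a b, φ p = 0) (hmono : MonotoneOn φ (Icc a x)) (hδ : 0 ≤ δ)
    (hxδ : φ x ≤ δ) : ∃ p ∈ Icc a b, φ p = 0 ∧ φ ((p + x) / 2) ≤ δ := by
  obtain ⟨p₀, hp₀, hp₀0⟩ := hzero
  obtain ⟨p, hp, hp0, hmid⟩ := exists_zero_midpoint_le_of_antitoneOn (φ := fun t => φ (-t))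
    (a := -b) (b := -a) (x := -x) (hφ.comp continuousOn_neg fun t ht => by
      simp only [mem_Icc] at ht ⊢; constructor <;> linarith)
    (by simpa using ha) ⟨by linarith [hx.2], by linarith [hx.1]⟩
    ⟨-p₀, ⟨by linarith [hp₀.2], by linarith [hp₀.1]⟩, by simpa using hp₀0⟩
    (fun s hs t ht hst => hmono ⟨by linarith [ht.2], by linarith [ht.1]⟩
      ⟨by linarith [hs.2], by linarith [hs.1]⟩ (by linarith)) hδ (by simpa using hxδ)
  refine ⟨-p, ⟨by linarith [hp.2], by linarith [hp.1]⟩, hp0, ?_⟩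
  convert hmid using 2
  ring

lemma exists_fixedPoint_sq_sub_le {δ a b x : ℝ} (hM : 0 < M)
    (hg : ∀ r ∈ Icc a b, HasDerivAt g (G r) r) (hG0 : ∀ r ∈ Icc a b, 0 ≤ G r)
    (hdecay : DecayOn G M (Icc a b)) (ha : g a ≤ a) (hb : g b ≤ b)
    (hfix : ∃ p ∈ Icc a b, g p = p) (hx : x ∈ Icc a b) (hxδ : |g x - x| ≤ δ) :
    ∃ p ∈ Icc a b, g p = p ∧ (x - p) ^ 2 ≤ 24 * δ * (4 * M + |x - p|) := by
  have hG := hdecay.antitoneOn hM hG0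
  have hφ : ContinuousOn (fun r => g r - r) (Icc a b) :=
    fun r hr => ((hg r hr).continuousAt.sub continuousAt_id).continuousWithinAt
  have hzero : ∃ p ∈ Icc a b, g p - p = 0 := by
    obtain ⟨p, hp, hpp⟩ := hfix
    exact ⟨p, hp, sub_eq_zero.2 hpp⟩
  have hδ : 0 ≤ δ := (abs_nonneg _).trans hxδ
  obtain ⟨p, hp, hp0, hmid⟩ : ∃ p ∈ Icc a b, g p - p = 0 ∧
      g ((p + x) / 2) - (p + x) / 2 ≤ δ := by
    rcases le_total (G x) 1 with hGx | hGx
    · refine exists_zero_midpoint_le_of_antitoneOn hφ (by linarith) hx hzero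
        (antitoneOn_sub_id_of_le_one (fun r hr => hg r ⟨hx.1.trans hr.1, hr.2⟩)
          fun r hr => (hG hx ⟨hx.1.trans hr.1, hr.2⟩ hr.1).trans hGx) hδ (abs_le.1 hxδ).2
    · refine exists_zero_midpoint_le_of_monotoneOn hφ (by linarith) hx hzero
        (monotoneOn_sub_id_of_one_le (fun r hr => hg r ⟨hr.1, hr.2.trans hx.2⟩)
          fun r hr => hGx.trans (hG ⟨hr.1, hr.2.trans hx.2⟩ hx hr.2)) hδ (abs_le.1 hxδ).2
  have hpδ : |g p - p| ≤ δ := by rw [hp0, abs_zero]; exact hδ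
  refine ⟨p, hp, sub_eq_zero.1 hp0, ?_⟩
  have hsub : ∀ {u v}, u ∈ Icc a b → v ∈ Icc a b → Icc u v ⊆ Icc a b :=
    fun hu hv => Icc_subset_Icc hu.1 hv.2
  rcases le_total p x with hpx | hxp
  · rw [abs_of_nonneg (sub_nonneg.2 hpx)]
    exact sq_sub_le_of_decayOn hM hpx (fun r hr => hg r (hsub hp hx hr))
      (fun r hr => hG0 r (hsub hp hx hr)) (hdecay.mono (hsub hp hx)) hpδ hxδ hmid
  · rw [abs_sub_comm, abs_of_nonneg (sub_nonneg.2 hxp), ← neg_sub, neg_sq]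
    exact sq_sub_le_of_decayOn hM hxp (fun r hr => hg r (hsub hx hp hr))
      (fun r hr => hG0 r (hsub hx hp hr)) (hdecay.mono (hsub hx hp)) hxδ hpδ
      (by rwa [add_comm])

end IntervalMaps

section Words

variable {f0 f1 df0 df1 : ℝ → ℝ} {d M : ℝ}

lemma H1.f0_zero (h : H1 f0 f1 df0 df1 d) : f0 0 = 0 := by
  obtain ⟨t, ht, h0⟩ := h.surj0 (left_mem_Icc.2 zero_le_one)
  have h1 : (0:ℝ) ≤ f0 0 := (h.maps0 (left_mem_Icc.2 zero_le_one)).1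
  linarith [h.mono0.monotone ht.1]

lemma H1.strictMono_letter (h : H1 f0 f1 df0 df1 d) (i : Fin 2) :
    StrictMono (if i = 0 then f0 else f1) := by
  split_ifs
  exacts [h.mono0, h.mono1]

lemma H1.hasDerivAt_letter (h : H1 f0 f1 df0 df1 d) (i : Fin 2) (x : ℝ) :
    HasDerivAt (if i = 0 then f0 else f1) (if i = 0 then df0 x else df1 x) x := by
  split_ifs
  exacts [h.hasDeriv0 x, h.hasDeriv1 x]

lemma H1.letter_mem_Icc (h : H1 f0 f1 df0 df1 d) {i : Fin 2} {x : ℝ} (hx : x ∈ Icc (0 : ℝ) 1)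
    (hxd : i = 1 → d ≤ x) : (if i = 0 then f0 else f1) x ∈ Icc (0 : ℝ) 1 := by
  obtain rfl | rfl : i = 0 ∨ i = 1 := by omega
  · exact h.maps0 hx
  · exact h.maps1 ⟨hxd rfl, hx.2⟩

lemma H1.exists_letter_eq (h : H1 f0 f1 df0 df1 d) {i : Fin 2} {x z : ℝ}
    (hx : x ∈ Icc (0 : ℝ) 1) (hxd : i = 1 → d ≤ x) (hz : 0 ≤ z)
    (hzx : z ≤ (if i = 0 then f0 else f1) x) :
    ∃ c, 0 ≤ c ∧ (i = 1 → d ≤ c) ∧ (if i = 0 then f0 else f1) c = z := by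
  obtain rfl | rfl : i = 0 ∨ i = 1 := by omega
  · obtain ⟨c, hc, hcz⟩ := intermediate_value_Icc hx.1
      (fun y _ => (h.hasDeriv0 y).continuousAt.continuousWithinAt)
      (show z ∈ Icc (f0 0) (f0 x) by rw [h.f0_zero]; exact ⟨hz, hzx⟩)
    exact ⟨c, hc.1, by simp, hcz⟩
  · obtain ⟨c, hc, hcz⟩ := intermediate_value_Icc (hxd rfl)
      (fun y _ => (h.hasDeriv1 y).continuousAt.continuousWithinAt)
      (show z ∈ Icc (f1 d) (f1 x) by rw [h.f1_d]; exact ⟨hz, hzx⟩)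
    exact ⟨c, h.d_mem.1.le.trans hc.1, fun _ => hc.1, hcz⟩

lemma wordAdm_mem_Icc {w : List (Fin 2)} {x : ℝ} (h : wordAdm f0 f1 d w x) :
    x ∈ Icc (0 : ℝ) 1 := by
  cases w with
  | nil => exact h
  | cons i v => exact h.1

lemma fWord_mem_Icc {w : List (Fin 2)} {x : ℝ} (h : wordAdm f0 f1 d w x) :
    fWord f0 f1 w x ∈ Icc (0 : ℝ) 1 := by
  induction w generalizing x with
  | nil => exact h
  | cons i v ih => exact ih h.2.2

lemma exists_IWord_eq_Icc (h : H1 f0 f1 df0 df1 d) (w : List (Fin 2))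
    (hne : (IWord f0 f1 d w).Nonempty) :
    ∃ a, IWord f0 f1 d w = Icc a 1 ∧ fWord f0 f1 w a = 0 := by
  induction w with
  | nil => exact ⟨0, rfl, rfl⟩
  | cons i v ih =>
    obtain ⟨x, hxI, hxd, hxv⟩ := hne
    obtain ⟨a, hIv, ha⟩ := ih ⟨_, hxv⟩
    have hxv' : (if i = 0 then f0 else f1) x ∈ Icc a 1 := hIv ▸ hxv
    have haI : a ∈ IWord f0 f1 d v := hIv ▸ ⟨le_rfl, hxv'.1.trans hxv'.2⟩
    have ha0 : 0 ≤ a := (wordAdm_mem_Icc haI).1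
    obtain ⟨c, hc0, hcd, hca⟩ := h.exists_letter_eq hxI hxd ha0 hxv'.1
    refine ⟨c, ?_, by simp only [fWord, hca, ha]⟩
    ext y
    simp only [IWord, wordAdm, mem_ofPred_eq]
    rw [show wordAdm f0 f1 d v _ ↔ _ ∈ Icc a 1 from Set.ext_iff.1 hIv _, ← hca]
    simp only [mem_Icc, (h.strictMono_letter i).le_iff_le]
    constructor
    · rintro ⟨⟨-, hy1⟩, -, hcy, -⟩
      exact ⟨hcy, hy1⟩
    · rintro ⟨hcy, hy1⟩
      have hyI : y ∈ Icc (0 : ℝ) 1 := ⟨hc0.trans hcy, hy1⟩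
      have hyd : i = 1 → d ≤ y := fun hi => (hcd hi).trans hcy
      exact ⟨hyI, hyd, hcy, (h.letter_mem_Icc hyI hyd).2⟩

lemma hasDerivAt_fWord (h : H1 f0 f1 df0 df1 d) (w : List (Fin 2)) (x : ℝ) :
    HasDerivAt (fWord f0 f1 w) (fWordDeriv f0 f1 df0 df1 w x) x := by
  induction w generalizing x with
  | nil => exact hasDerivAt_id x
  | cons i v ih =>
    rw [fWordDeriv, mul_comm]
    exact (ih _).comp x (h.hasDerivAt_letter i x)

lemma H1.letterDeriv_pos (h1 : H1 f0 f1 df0 df1 d) (h2 : H2 df0 df1 d) {i : Fin 2} {x : ℝ}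
    (hx : x ∈ Icc (0 : ℝ) 1) (hxd : i = 1 → d ≤ x) :
    0 < if i = 0 then df0 x else df1 x := by
  obtain rfl | rfl : i = 0 ∨ i = 1 := by omega
  · rcases hx.2.eq_or_lt with rfl | hx1
    · exact h1.deriv0_one.1
    · exact h1.deriv0_one.1.trans (h2.1 hx (right_mem_Icc.2 zero_le_one) hx1)
  · exact h1.deriv1_one.trans_le (h2.2 ⟨hxd rfl, hx.2⟩ ⟨h1.d_mem.2.le, le_rfl⟩ hx.2)

lemma H2.letterDeriv_le_of_le (h2 : H2 df0 df1 d) {i : Fin 2} {x y : ℝ}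
    (hx : x ∈ Icc (0 : ℝ) 1) (hxd : i = 1 → d ≤ x) (hy : y ∈ Icc (0 : ℝ) 1)
    (hyd : i = 1 → d ≤ y) (hxy : x ≤ y) :
    (if i = 0 then df0 y else df1 y) ≤ if i = 0 then df0 x else df1 x := by
  obtain rfl | rfl : i = 0 ∨ i = 1 := by omega
  · exact h2.1.antitoneOn hx hy hxy
  · exact h2.2 ⟨hxd rfl, hx.2⟩ ⟨hyd rfl, hy.2⟩ hxy

lemma mul_one_add_le_of_le_log_sub {a b c : ℝ} (ha : 0 < a) (hb : 0 < b)
    (h : c ≤ Real.log a - Real.log b) : b * (1 + c) ≤ a := by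
  have : 1 + c ≤ a / b := by
    calc 1 + c ≤ Real.exp c := by linarith [Real.add_one_le_exp c]
      _ ≤ Real.exp (Real.log a - Real.log b) := Real.exp_le_exp.2 h
      _ = a / b := by rw [Real.exp_sub, Real.exp_log ha, Real.exp_log hb]
  rwa [← le_div_iff₀' hb]

lemma H2plus.letterDeriv_mul_one_add_le (hM : H2plus df0 df1 d M) (h1 : H1 f0 f1 df0 df1 d)
    (h2 : H2 df0 df1 d) {i : Fin 2} {x y : ℝ} (hx : x ∈ Icc (0 : ℝ) 1)
    (hxd : i = 1 → d ≤ x) (hy : y ∈ Icc (0 : ℝ) 1) (hyd : i = 1 → d ≤ y) (hxy : x ≤ y) :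
    (if i = 0 then df0 y else df1 y) * (1 + (y - x) / M) ≤ if i = 0 then df0 x else df1 x := by
  rcases hxy.eq_or_lt with rfl | hxy
  · simp
  refine mul_one_add_le_of_le_log_sub (h1.letterDeriv_pos h2 hx hxd)
    (h1.letterDeriv_pos h2 hy hyd) ?_
  rw [div_eq_inv_mul]
  obtain rfl | rfl : i = 0 ∨ i = 1 := by omega
  · exact (hM.2.1 x hx y hy hxy).1
  · exact (hM.2.2 x ⟨hxd rfl, hx.2⟩ y ⟨hyd rfl, hy.2⟩ hxy).1

lemma fWordDeriv_pos (h1 : H1 f0 f1 df0 df1 d) (h2 : H2 df0 df1 d) {w : List (Fin 2)} {x : ℝ}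
    (hx : wordAdm f0 f1 d w x) : 0 < fWordDeriv f0 f1 df0 df1 w x := by
  induction w generalizing x with
  | nil => exact one_pos
  | cons i v ih => exact mul_pos (h1.letterDeriv_pos h2 hx.1 hx.2.1) (ih hx.2.2)

lemma fWordDeriv_le_of_le (h1 : H1 f0 f1 df0 df1 d) (h2 : H2 df0 df1 d) {w : List (Fin 2)}
    {x y : ℝ} (hx : wordAdm f0 f1 d w x) (hy : wordAdm f0 f1 d w y) (hxy : x ≤ y) :
    fWordDeriv f0 f1 df0 df1 w y ≤ fWordDeriv f0 f1 df0 df1 w x := by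
  induction w generalizing x y with
  | nil => exact le_rfl
  | cons i v ih =>
    exact mul_le_mul (h2.letterDeriv_le_of_le hx.1 hx.2.1 hy.1 hy.2.1 hxy)
      (ih hx.2.2 hy.2.2 ((h1.strictMono_letter i).monotone hxy))
      (fWordDeriv_pos h1 h2 hy.2.2).le (h1.letterDeriv_pos h2 hx.1 hx.2.1).le

-- (H2+) is only needed for the first letter; the rest of the word contributes monotonically.
lemma decayOn_fWordDeriv (h1 : H1 f0 f1 df0 df1 d) (h2 : H2 df0 df1 d)
    (hM : H2plus df0 df1 d M) {w : List (Fin 2)} (hw : w ≠ []) :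
    DecayOn (fWordDeriv f0 f1 df0 df1 w) M (IWord f0 f1 d w) := by
  intro x hx y hy hxy
  obtain ⟨i, v, rfl⟩ := List.exists_cons_of_ne_nil hw
  calc fWordDeriv f0 f1 df0 df1 (i :: v) y * (1 + (y - x) / M)
      = (if i = 0 then df0 y else df1 y) * (1 + (y - x) / M) *
          fWordDeriv f0 f1 df0 df1 v ((if i = 0 then f0 else f1) y) := by
        rw [fWordDeriv]; ring
    _ ≤ _ := mul_le_mul (hM.letterDeriv_mul_one_add_le h1 h2 hx.1 hx.2.1 hy.1 hy.2.1 hxy)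
        (fWordDeriv_le_of_le h1 h2 hx.2.2 hy.2.2 ((h1.strictMono_letter i).monotone hxy))
        (fWordDeriv_pos h1 h2 hy.2.2).le (h1.letterDeriv_pos h2 hx.1 hx.2.1).le

lemma exists_fixedPoint_fWord_sq_sub_le {δ x : ℝ} (h1 : H1 f0 f1 df0 df1 d)
    (h2 : H2 df0 df1 d) (hM : H2plus df0 df1 d M) {w : List (Fin 2)} (hw : w ≠ [])
    (hfix : ∃ p, wordAdm f0 f1 d w p ∧ fWord f0 f1 w p = p)
    (hx : x ∈ Icc (aWord f0 f1 d w) 1) (hxδ : |fWord f0 f1 w x - x| ≤ δ) :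
    ∃ p, wordAdm f0 f1 d w p ∧ fWord f0 f1 w p = p ∧ (x - p) ^ 2 ≤ 120 * M * δ := by
  obtain ⟨p₀, hp₀, hp₀fix⟩ := hfix
  obtain ⟨a, hI, ha⟩ := exists_IWord_eq_Icc h1 w ⟨p₀, hp₀⟩
  have hadm : ∀ r ∈ Icc a 1, wordAdm f0 f1 d w r :=
    fun r hr => (hI ▸ hr : r ∈ IWord f0 f1 d w)
  have hp₀I : p₀ ∈ Icc a 1 := hI ▸ hp₀
  have ha1 : a ∈ Icc a 1 := ⟨le_rfl, hp₀I.1.trans hp₀I.2⟩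
  rw [aWord, hI, csInf_Icc ha1.2] at hx
  have hM0 : 0 < M := zero_lt_one.trans hM.1
  obtain ⟨p, hp, hpfix, hdist⟩ := exists_fixedPoint_sq_sub_le hM0
    (fun r _ => hasDerivAt_fWord h1 w r) (fun r hr => (fWordDeriv_pos h1 h2 (hadm r hr)).le)
    (hI ▸ decayOn_fWordDeriv h1 h2 hM hw)
    (ha ▸ (wordAdm_mem_Icc (hadm a ha1)).1) (fWord_mem_Icc (hadm 1 ⟨ha1.2, le_rfl⟩)).2
    ⟨p₀, hp₀I, hp₀fix⟩ hx hxδ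
  refine ⟨p, hadm p hp, hpfix, hdist.trans ?_⟩
  have ha0 : 0 ≤ a := (wordAdm_mem_Icc (hadm a ha1)).1
  have hxp : |x - p| ≤ 1 :=
    abs_sub_le_iff.2 ⟨by linarith [hx.2, hp.1], by linarith [hx.1, hp.2]⟩
  have hδ : 0 ≤ δ := (abs_nonneg _).trans hxδ
  nlinarith [hM.1]

end Words

theorem statement_16 (f0 f1 df0 df1 : ℝ → ℝ) (d : ℝ) (hH1 : H1 f0 f1 df0 df1 d)
    (hH2 : H2 df0 df1 d) (hH2p : ∃ M : ℝ, H2plus df0 df1 d M) :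
    ∃ h : ℝ → ℝ,
      (∀ t : ℝ, 0 < t → 0 < h t) ∧
      Tendsto h (nhdsWithin 0 (Ioi 0)) (nhds 0) ∧
      ∀ w : List (Fin 2), w ≠ [] →
        (∃ p : ℝ, wordAdm f0 f1 d w p ∧ fWord f0 f1 w p = p) →
        ∀ ε : ℝ, 0 < ε → ∀ x : ℝ, x ∈ Icc (aWord f0 f1 d w) 1 →
          |fWord f0 f1 w x - x| < ε →
          ∃ p : ℝ, wordAdm f0 f1 d w p ∧ fWord f0 f1 w p = p ∧ |x - p| ≤ h ε := by
  obtain ⟨M, hM⟩ := hH2p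
  have hM0 : 0 < M := zero_lt_one.trans hM.1
  refine ⟨fun ε => √(120 * M * ε), fun t ht => Real.sqrt_pos.2 (by positivity), ?_, ?_⟩
  · have hcont : Continuous fun ε : ℝ => √(120 * M * ε) := by fun_prop
    simpa using (hcont.tendsto 0).mono_left nhdsWithin_le_nhds
  · intro w hw hfix ε _ x hx hxε
    obtain ⟨p, hp, hpfix, hdist⟩ :=
      exists_fixedPoint_fWord_sq_sub_le hH1 hH2 hM hw hfix hx hxε.le
    exact ⟨p, hp, hpfix, Real.abs_le_sqrt hdist⟩

end DGR
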